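/- Let V ⊆ ℂ² be a set with the property that for every nonzero polynomial Q ∈ ℂ[x, y] of total degree at most 2 there exist at least two points of V at which Q does not vanish, and suppose V contains three distinct collinear points. Then there exists a subset S ⊆ V with |S| = 7 such that no four points of S are collinear and no nonzero polynomial of total degree at most 2 vanishes at all seven points of S. -/

import Mathlib

/-!
Let `L` be the line through the three collinear points `a, b, c`. Applying the hypothesis to `L`
and to products of `L` with one further line yields four points of `V` off `L`, no three
collinear: if the first four candidates contain a collinear triple, one more point off `L` and
off that triple's line replaces one of them. These four points together with `a, b, c` form `S`.
Four collinear points of `S` would need either two points on `L`, forcing their line to be `L`,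
or three of the four points off `L`. A conic through `S` vanishes at three points of `L`, hence
on all of `L`, so by the Nullstellensatz it is `ℓ_L * M` with `M` linear. The same argument shows
that `M`, which vanishes at three non-collinear points, is zero.
-/

open MvPolynomial

section AffineGeometry

variable {k V P : Type*} [DivisionRing k] [AddCommGroup V] [Module k V] [AddTorsor V P]

variable (k) in
def NoThreeCollinear (s : Set P) : Prop :=
  ∀ p ∈ s, ∀ q ∈ s, ∀ r ∈ s, p ≠ q → p ≠ r → q ≠ r → ¬Collinear k {p, q, r}

theorem not_collinear_of_notMem_affineSpan {s : Set P} {p q r : P} (hp : p ∈ s) (hq : q ∈ s)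
    (hpq : p ≠ q) (hr : r ∉ affineSpan k s) : ¬Collinear k {r, p, q} := fun h =>
  hr (affineSpan_mono k (Set.pair_subset hp hq)
    (h.mem_affineSpan_of_mem_of_ne (by simp) (by simp) (by simp) hpq))

theorem exists_pair_not_collinear {p₁ p₂ p₃ e h : P} (h₁₂ : p₁ ≠ p₂) (h₁₃ : p₁ ≠ p₃)
    (h₂₃ : p₂ ≠ p₃) (he : e ∉ affineSpan k {p₁, p₂, p₃}) (hh : h ∉ affineSpan k {p₁, p₂, p₃})
    (heh : e ≠ h) :
    ∃ p ∈ ({p₁, p₂, p₃} : Set P), ∃ q ∈ ({p₁, p₂, p₃} : Set P), ¬Collinear k {e, h, p} ∧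
      ¬Collinear k {e, h, q} ∧ ¬Collinear k {e, p, q} ∧ ¬Collinear k {h, p, q} := by
  have hoff : ∀ p ∈ ({p₁, p₂, p₃} : Set P), ∀ q ∈ ({p₁, p₂, p₃} : Set P), p ≠ q →
      ¬Collinear k {e, p, q} ∧ ¬Collinear k {h, p, q} := fun p hp q hq hpq =>
    ⟨not_collinear_of_notMem_affineSpan hp hq hpq he,
      not_collinear_of_notMem_affineSpan hp hq hpq hh⟩
  -- two of the `pᵢ` on the line `eh` would put `e` on the line through them
  have honce : ∀ p ∈ ({p₁, p₂, p₃} : Set P), ∀ q ∈ ({p₁, p₂, p₃} : Set P), p ≠ q →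
      Collinear k {e, h, p} → ¬Collinear k {e, h, q} := fun p hp q hq hpq hcp hcq =>
    (hoff p hp q hq hpq).1 (collinear_triple_of_mem_affineSpan_pair
      (left_mem_affineSpan_pair k e h)
      (hcp.mem_affineSpan_of_mem_of_ne (by simp) (by simp) (by simp) heh)
      (hcq.mem_affineSpan_of_mem_of_ne (by simp) (by simp) (by simp) heh))
  by_cases c₁ : Collinear k {e, h, p₁}
  · exact ⟨p₂, by simp, p₃, by simp, honce p₁ (by simp) p₂ (by simp) h₁₂ c₁,
      honce p₁ (by simp) p₃ (by simp) h₁₃ c₁, hoff p₂ (by simp) p₃ (by simp) h₂₃⟩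
  by_cases c₂ : Collinear k {e, h, p₂}
  · exact ⟨p₁, by simp, p₃, by simp, c₁, honce p₂ (by simp) p₃ (by simp) h₂₃ c₂,
      hoff p₁ (by simp) p₃ (by simp) h₁₃⟩
  exact ⟨p₁, by simp, p₂, by simp, c₁, c₂, hoff p₁ (by simp) p₂ (by simp) h₁₂⟩

theorem exists_subset_ncard_eq_four_noThreeCollinear {S : Set P} {w x y z : P}
    (hS : {w, x, y, z} ⊆ S) (h₁ : ¬Collinear k {w, x, y}) (h₂ : ¬Collinear k {w, x, z})
    (h₃ : ¬Collinear k {w, y, z}) (h₄ : ¬Collinear k {x, y, z}) :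
    ∃ E ⊆ S, E.ncard = 4 ∧ NoThreeCollinear k E := by
  refine ⟨_, hS, ?_, ?_⟩
  · rw [Set.ncard_insert_of_notMem (by simp [ne₁₂_of_not_collinear h₁, ne₁₃_of_not_collinear h₁,
        ne₁₃_of_not_collinear h₂]),
      Set.ncard_insert_of_notMem (by simp [ne₁₂_of_not_collinear h₄, ne₁₃_of_not_collinear h₄]),
      Set.ncard_pair (ne₂₃_of_not_collinear h₄)]
  intro p hp q hq r hr hpq hpr hqr hc
  simp only [Set.mem_insert_iff, Set.mem_singleton_iff] at hp hq hr
  rcases hp with rfl | rfl | rfl | rfl <;> rcases hq with rfl | rfl | rfl | rfl <;>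
    rcases hr with rfl | rfl | rfl | rfl <;>
    first
    | exact hpq rfl | exact hpr rfl | exact hqr rfl
    | (refine h₁ (hc.subset ?_); simp [Set.insert_subset_iff]; done)
    | (refine h₂ (hc.subset ?_); simp [Set.insert_subset_iff]; done)
    | (refine h₃ (hc.subset ?_); simp [Set.insert_subset_iff]; done)
    | (refine h₄ (hc.subset ?_); simp [Set.insert_subset_iff])

theorem not_collinear_of_subset_union {A E T : Set P} (hA : A.Finite) (hA3 : A.ncard ≤ 3)
    (hE : NoThreeCollinear k E) (hAE : ∀ e ∈ E, e ∉ affineSpan k A) (hT : T ⊆ A ∪ E)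
    (hT4 : T.ncard = 4) : ¬Collinear k T := by
  intro hcol
  have hTfin : T.Finite := Set.finite_of_ncard_ne_zero (by omega)
  by_cases h3 : 2 < (T ∩ E).ncard
  · obtain ⟨p, q, r, hp, hq, hr, hpq, hpr, hqr⟩ :=
      (Set.two_lt_ncard_iff (hTfin.inter_of_left _)).mp h3
    exact hE p hp.2 q hq.2 r hr.2 hpq hpr hqr
      (hcol.subset (Set.insert_subset hp.1 (Set.pair_subset hq.1 hr.1)))
  have hsplit : T = T ∩ A ∪ T ∩ E := by
    rw [← Set.inter_union_distrib_left, Set.inter_eq_left.mpr hT]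
  have h2 : 1 < (T ∩ A).ncard := by
    have := Set.ncard_union_le (T ∩ A) (T ∩ E)
    rw [← hsplit] at this
    omega
  obtain ⟨p, q, hp, hq, hpq⟩ := (Set.one_lt_ncard_iff (hTfin.inter_of_left _)).mp h2
  obtain ⟨e, heT, heA⟩ : ∃ e ∈ T, e ∉ A := by
    by_contra! hTA
    have := Set.ncard_le_ncard hTA hA
    omega
  exact hAE e ((hT heT).resolve_left heA) (affineSpan_mono k (Set.pair_subset hp.2 hq.2)
    (hcol.mem_affineSpan_of_mem_of_ne hp.1 hq.1 heT hpq))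

end AffineGeometry

namespace MvPolynomial

variable {K σ : Type*} [Field K]

theorem eval_lineMap_eq_zero_of_totalDegree_lt {P : MvPolynomial σ K} {a b : σ → K}
    {T : Finset K} (hT : P.totalDegree < T.card)
    (hP : ∀ t ∈ T, eval (AffineMap.lineMap a b t) P = 0) (t : K) :
    eval (AffineMap.lineMap a b t) P = 0 := by
  set R : Polynomial K :=
    aeval (fun i => Polynomial.C (b i - a i) * Polynomial.X + Polynomial.C (a i)) P with hRdef
  have hR : ∀ t, R.eval t = eval (AffineMap.lineMap a b t) P := by
    intro t
    rw [hRdef, aeval_def, polynomial_eval_eval₂]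
    congr 1
    · ext; simp
    · ext i; simp [AffineMap.lineMap_apply]; ring
  have hdeg : R.natDegree ≤ P.totalDegree := by
    simpa using aeval_natDegree_le P le_rfl _ fun i => Polynomial.natDegree_linear_le
  have hR0 : R = 0 :=
    Polynomial.eq_zero_of_natDegree_lt_card_of_eval_eq_zero' R T
      (fun t ht => (hR t).trans (hP t ht)) (hdeg.trans_lt hT)
  rw [← hR, hR0, Polynomial.eval_zero]

theorem dvd_of_totalDegree_eq_one_of_eval_eq_zero [IsAlgClosed K] [Finite σ]
    {ℓ P : MvPolynomial σ K} (hℓ : ℓ.totalDegree = 1) (hP : ∀ x, eval x ℓ = 0 → eval x P = 0) : ℓ ∣ P := by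
  have hprime : Prime ℓ := by
    refine (irreducible_of_totalDegree_eq_one hℓ fun c hc => ?_).prime
    refine isUnit_iff_ne_zero.mpr fun hc0 => ?_
    have : ℓ = 0 := by ext m; simpa [hc0] using hc m
    simp [this] at hℓ
  have hrad : P ∈ (Ideal.span {ℓ}).radical := by
    rw [← vanishingIdeal_zeroLocus_eq_radical (K := K)]
    exact fun x hx => hP x (hx ℓ (Ideal.mem_span_singleton_self ℓ))
  obtain ⟨n, hn⟩ := hrad
  exact hprime.dvd_of_dvd_pow (Ideal.mem_span_singleton.mp hn)

end MvPolynomial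

section Plane

variable {K : Type*} [Field K]

noncomputable def linePoly (p q : Fin 2 → K) : MvPolynomial (Fin 2) K :=
  C (q 0 - p 0) * (X 1 - C (p 1)) - C (q 1 - p 1) * (X 0 - C (p 0))

@[simp]
theorem eval_linePoly (p q r : Fin 2 → K) :
    eval r (linePoly p q) = (q 0 - p 0) * (r 1 - p 1) - (q 1 - p 1) * (r 0 - p 0) := by
  simp [linePoly]

theorem eval_linePoly_eq_zero_iff {p q r : Fin 2 → K} (hpq : p ≠ q) :
    eval r (linePoly p q) = 0 ↔ r ∈ line[K, p, q] := by
  rw [mem_affineSpan_pair_iff_exists_lineMap_eq, eval_linePoly]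
  constructor
  · intro h
    have hne : q 0 - p 0 ≠ 0 ∨ q 1 - p 1 ≠ 0 := by
      by_contra! h'
      exact hpq (funext (Fin.forall_fin_two.mpr
        ⟨by linear_combination -h'.1, by linear_combination -h'.2⟩))
    rcases hne with h0 | h1
    · refine ⟨(r 0 - p 0) / (q 0 - p 0), funext (Fin.forall_fin_two.mpr ⟨?_, ?_⟩)⟩ <;>
        simp only [AffineMap.lineMap_apply_module', Pi.add_apply, Pi.smul_apply, Pi.sub_apply,
          smul_eq_mul] <;> field_simp
      · ring
      · linear_combination -h
    · refine ⟨(r 1 - p 1) / (q 1 - p 1), funext (Fin.forall_fin_two.mpr ⟨?_, ?_⟩)⟩ <;>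
        simp only [AffineMap.lineMap_apply_module', Pi.add_apply, Pi.smul_apply, Pi.sub_apply,
          smul_eq_mul] <;> field_simp
      · linear_combination h
      · ring
  · rintro ⟨t, rfl⟩
    simp [AffineMap.lineMap_apply]
    ring

theorem totalDegree_linePoly {p q : Fin 2 → K} (hpq : p ≠ q) :
    (linePoly p q).totalDegree = 1 := by
  refine le_antisymm ?_ (Nat.one_le_iff_ne_zero.mpr fun h0 => hpq ?_)
  · refine (totalDegree_sub _ _).trans (max_le ?_ ?_) <;>
      refine (totalDegree_mul _ _).trans ?_ <;>
      simp only [totalDegree_C, zero_add] <;>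
      exact (totalDegree_sub _ _).trans (max_le (totalDegree_X _).le (by simp))
  · have hconst : ∀ r, eval r (linePoly p q) = eval p (linePoly p q) := by
      rw [totalDegree_eq_zero_iff_eq_C.mp h0]
      simp
    have h0 := hconst (Function.update p 1 (p 1 + 1))
    have h1 := hconst (Function.update p 0 (p 0 + 1))
    simp at h0 h1
    exact funext (Fin.forall_fin_two.mpr ⟨by linear_combination -h0, by linear_combination h1⟩)

theorem linePoly_ne_zero {p q : Fin 2 → K} (hpq : p ≠ q) : linePoly p q ≠ 0 := fun h => by
  simpa [h] using totalDegree_linePoly hpq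

theorem exists_eq_linePoly_mul [IsAlgClosed K] {p q : Fin 2 → K} (hpq : p ≠ q)
    {P : MvPolynomial (Fin 2) K} {n : ℕ} (hP : P.totalDegree ≤ n + 1) {T : Finset K}
    (hT : n + 1 < T.card) (hPT : ∀ t ∈ T, eval (AffineMap.lineMap p q t) P = 0) :
    ∃ M, P = linePoly p q * M ∧ M.totalDegree ≤ n := by
  have hℓ := totalDegree_linePoly hpq
  obtain ⟨M, rfl⟩ := dvd_of_totalDegree_eq_one_of_eval_eq_zero hℓ fun r hr => by
    obtain ⟨t, rfl⟩ :=
      mem_affineSpan_pair_iff_exists_lineMap_eq.mp ((eval_linePoly_eq_zero_iff hpq).mp hr)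
    exact eval_lineMap_eq_zero_of_totalDegree_lt (hP.trans_lt hT) hPT t
  refine ⟨M, rfl, ?_⟩
  rcases eq_or_ne M 0 with rfl | hM
  · simp
  rw [totalDegree_mul_of_isDomain (linePoly_ne_zero hpq) hM, hℓ] at hP
  omega

theorem eval_mul_linePoly_eq_zero_iff {p q r : Fin 2 → K} (hpq : p ≠ q)
    (hr : r ∉ line[K, p, q]) {M : MvPolynomial (Fin 2) K} :
    eval r (linePoly p q * M) = 0 ↔ eval r M = 0 := by
  rw [map_mul, mul_eq_zero, eval_linePoly_eq_zero_iff hpq, or_iff_right hr]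

theorem eq_zero_of_totalDegree_le_two_of_eval_eq_zero [IsAlgClosed K] {Q : MvPolynomial (Fin 2) K}
    (hQ : Q.totalDegree ≤ 2) {a b c w x y : Fin 2 → K} (hab : a ≠ b) (hc : c ∈ line[K, a, b])
    (hca : c ≠ a) (hcb : c ≠ b) (hw : w ∉ line[K, a, b]) (hx : x ∉ line[K, a, b])
    (hy : y ∉ line[K, a, b]) (hwxy : ¬Collinear K {w, x, y})
    (hQ0 : ∀ p ∈ ({a, b, c, w, x, y} : Set (Fin 2 → K)), eval p Q = 0) : Q = 0 := by
  classical
  obtain ⟨s, rfl⟩ := mem_affineSpan_pair_iff_exists_lineMap_eq.mp hc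
  have hs0 : s ≠ 0 := by rintro rfl; simp at hca
  have hs1 : s ≠ 1 := by rintro rfl; simp at hcb
  obtain ⟨M, rfl, hM⟩ := exists_eq_linePoly_mul (n := 1) hab hQ (T := {0, 1, s})
    (by rw [Finset.card_insert_of_notMem (by simp [hs0.symm]), Finset.card_pair hs1.symm]
        norm_num)
    (by simpa using ⟨hQ0 a (by simp), hQ0 b (by simp), hQ0 _ (by simp)⟩)
  have hwx : w ≠ x := ne₁₂_of_not_collinear hwxy
  have hMw := (eval_mul_linePoly_eq_zero_iff hab hw).mp (hQ0 w (by simp))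
  have hMx := (eval_mul_linePoly_eq_zero_iff hab hx).mp (hQ0 x (by simp))
  obtain ⟨N, rfl, hN⟩ := exists_eq_linePoly_mul (n := 0) hwx hM (T := {0, 1}) (by simp)
    (by simpa using ⟨hMw, hMx⟩)
  obtain ⟨n, rfl⟩ : ∃ n, N = C n := ⟨_, totalDegree_eq_zero_iff_eq_C.mp (Nat.le_zero.mp hN)⟩
  have hy' : y ∉ line[K, w, x] := fun h =>
    hwxy ((collinear_insert_of_mem_affineSpan_pair h).subset (by simp [Set.insert_subset_iff]))
  have := hQ0 y (by simp)
  rw [eval_mul_linePoly_eq_zero_iff hab hy, eval_mul_linePoly_eq_zero_iff hwx hy', eval_C] at this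
  simp [this]

def TwoPointsOffEveryConic (V : Set (Fin 2 → K)) : Prop :=
  ∀ Q : MvPolynomial (Fin 2) K, Q ≠ 0 → Q.totalDegree ≤ 2 →
    ∃ p₁ ∈ V, ∃ p₂ ∈ V, p₁ ≠ p₂ ∧ eval p₁ Q ≠ 0 ∧ eval p₂ Q ≠ 0

namespace TwoPointsOffEveryConic

variable {V : Set (Fin 2 → K)} {a b : Fin 2 → K}

theorem exists_mem_ne_off_lines (hV : TwoPointsOffEveryConic V) (hab : a ≠ b) {p q : Fin 2 → K}
    (hpq : p ≠ q) (u : Fin 2 → K) : ∃ v ∈ V, v ≠ u ∧ v ∉ line[K, a, b] ∧ v ∉ line[K, p, q] := by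
  have hdeg : (linePoly a b * linePoly p q).totalDegree ≤ 2 :=
    (totalDegree_mul _ _).trans (by rw [totalDegree_linePoly hab, totalDegree_linePoly hpq])
  obtain ⟨v₁, hv₁, v₂, hv₂, hne, h₁, h₂⟩ :=
    hV _ (mul_ne_zero (linePoly_ne_zero hab) (linePoly_ne_zero hpq)) hdeg
  have hoff : ∀ v, eval v (linePoly a b * linePoly p q) ≠ 0 →
      v ∉ line[K, a, b] ∧ v ∉ line[K, p, q] := fun v hv => by
    rw [map_mul, mul_ne_zero_iff, ne_eq, ne_eq, eval_linePoly_eq_zero_iff hab,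
      eval_linePoly_eq_zero_iff hpq] at hv
    exact hv
  by_cases h : v₁ = u
  · exact ⟨v₂, hv₂, fun h' => hne (h.trans h'.symm), hoff v₂ h₂⟩
  · exact ⟨v₁, hv₁, h, hoff v₁ h₁⟩

theorem exists_four_noThreeCollinear_of_collinear (hV : TwoPointsOffEveryConic V) (hab : a ≠ b)
    {d e f g : Fin 2 → K} (hS : {d, e, f, g} ⊆ V \ line[K, a, b]) (hde : d ≠ e) (hfg : f ≠ g)
    (hf : f ∉ line[K, d, e]) (hg : g ∉ line[K, d, e]) (hfgd : Collinear K {f, g, d}) :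
    ∃ E ⊆ V \ line[K, a, b], E.ncard = 4 ∧ NoThreeCollinear K E := by
  obtain ⟨h, hhV, hhe, hhL, hhM⟩ := hV.exists_mem_ne_off_lines hab hfg e
  have hM : line[K, f, g] = affineSpan K {f, g, d} :=
    hfgd.affineSpan_eq_of_ne (by simp) (by simp) hfg
  have hdf : d ≠ f := fun h => hf (h ▸ left_mem_affineSpan_pair K d e)
  have hdg : d ≠ g := fun h => hg (h ▸ left_mem_affineSpan_pair K d e)
  have he : e ∉ affineSpan K {f, g, d} := fun he =>
    hf (((collinear_insert_iff_of_mem_affineSpan he).mpr hfgd).mem_affineSpan_of_mem_of_ne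
      (by simp) (by simp) (by simp) hde)
  obtain ⟨p, hp, q, hq, h₁, h₂, h₃, h₄⟩ :=
    exists_pair_not_collinear hfg hdf.symm hdg.symm he (hM ▸ hhM) hhe.symm
  refine exists_subset_ncard_eq_four_noThreeCollinear ?_ h₁ h₂ h₃ h₄
  have hfgdS : ({f, g, d} : Set _) ⊆ V \ line[K, a, b] := fun u hu => hS (by
    simp only [Set.mem_insert_iff, Set.mem_singleton_iff] at hu ⊢; tauto)
  simp only [Set.insert_subset_iff, Set.singleton_subset_iff]
  exact ⟨hS (by simp), ⟨hhV, hhL⟩, hfgdS hp, hfgdS hq⟩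

theorem exists_four_noThreeCollinear (hV : TwoPointsOffEveryConic V) (hab : a ≠ b) :
    ∃ E ⊆ V \ line[K, a, b], E.ncard = 4 ∧ NoThreeCollinear K E := by
  obtain ⟨d, hd, -, hdL, -⟩ := hV.exists_mem_ne_off_lines hab hab a
  obtain ⟨e, he, hed, heL, -⟩ := hV.exists_mem_ne_off_lines hab hab d
  obtain ⟨f, hf, -, hfL, hfde⟩ := hV.exists_mem_ne_off_lines hab hed.symm d
  obtain ⟨g, hg, hgf, hgL, hgde⟩ := hV.exists_mem_ne_off_lines hab hed.symm f
  have hS : {d, e, f, g} ⊆ V \ line[K, a, b] := by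
    simp only [Set.insert_subset_iff, Set.singleton_subset_iff, Set.mem_sdiff]
    exact ⟨⟨hd, hdL⟩, ⟨he, heL⟩, ⟨hf, hfL⟩, ⟨hg, hgL⟩⟩
  by_cases hfgd : Collinear K {f, g, d}
  · exact hV.exists_four_noThreeCollinear_of_collinear hab hS hed.symm hgf.symm hfde hgde hfgd
  by_cases hfge : Collinear K {f, g, e}
  · exact hV.exists_four_noThreeCollinear_of_collinear hab (by rwa [Set.insert_comm]) hed hgf.symm
      (by rwa [Set.pair_comm]) (by rwa [Set.pair_comm]) hfge
  refine exists_subset_ncard_eq_four_noThreeCollinear (y := d) (z := e) ?_ hfgd hfge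
    (not_collinear_of_notMem_affineSpan (by simp) (by simp) hed.symm hfde)
    (not_collinear_of_notMem_affineSpan (by simp) (by simp) hed.symm hgde)
  exact fun u hu => hS (by simp only [Set.mem_insert_iff, Set.mem_singleton_iff] at hu ⊢; tauto)

end TwoPointsOffEveryConic

end Plane

/-- Case 4 of the proof of Theorem 1.2: if `V ⊆ ℂ²` has at least two points outside
every algebraic curve of degree at most `2`, and `V` contains three distinct collinear
points, then `V` has a `7`-point subset `S` with no four points collinear and not
contained in any curve of degree at most `2` (i.e. `m₁(S) ≤ 3` and `m₂(S) ≤ 6`). -/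
theorem entire_green_statement_16 (V : Set (Fin 2 → ℂ))
    (hV : ∀ Q : MvPolynomial (Fin 2) ℂ, Q ≠ 0 → Q.totalDegree ≤ 2 →
      ∃ p₁ ∈ V, ∃ p₂ ∈ V, p₁ ≠ p₂ ∧
        MvPolynomial.eval p₁ Q ≠ 0 ∧ MvPolynomial.eval p₂ Q ≠ 0)
    (hcol : ∃ a ∈ V, ∃ b ∈ V, ∃ c ∈ V, a ≠ b ∧ a ≠ c ∧ b ≠ c ∧
      Collinear ℂ ({a, b, c} : Set (Fin 2 → ℂ))) :
    ∃ S ⊆ V, S.ncard = 7 ∧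
      (∀ T ⊆ S, T.ncard = 4 → ¬ Collinear ℂ T) ∧
      ∀ Q : MvPolynomial (Fin 2) ℂ, Q ≠ 0 → Q.totalDegree ≤ 2 →
        ∃ p ∈ S, MvPolynomial.eval p Q ≠ 0 := by
  obtain ⟨a, ha, b, hb, c, hc, hab, hac, hbc, habc⟩ := hcol
  obtain ⟨E, hEV, hE4, hE⟩ := TwoPointsOffEveryConic.exists_four_noThreeCollinear hV hab
  have hEfin : E.Finite := Set.finite_of_ncard_ne_zero (by omega)
  have hA3 : ({a, b, c} : Set (Fin 2 → ℂ)).ncard = 3 :=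
    Set.ncard_eq_three.mpr ⟨a, b, c, hab, hac, hbc, rfl⟩
  have hL : line[ℂ, a, b] = affineSpan ℂ {a, b, c} :=
    habc.affineSpan_eq_of_ne (by simp) (by simp) hab
  have hEL : ∀ e ∈ E, e ∉ affineSpan ℂ {a, b, c} := fun e he => hL ▸ (hEV he).2
  refine ⟨{a, b, c} ∪ E, Set.union_subset (by simp [Set.insert_subset_iff, *])
    (hEV.trans Set.sdiff_subset), ?_,
    fun T hT hT4 => not_collinear_of_subset_union (Set.toFinite _) hA3.le hE hEL hT hT4, ?_⟩
  · rw [Set.ncard_union_eq (Set.disjoint_right.mpr fun e he hA =>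
      hEL e he (subset_affineSpan ℂ _ hA)) (Set.toFinite _) hEfin, hA3, hE4]
  intro Q hQ hQ2
  by_contra! h0
  obtain ⟨w, x, y, hw, hx, hy, hwx, hwy, hxy⟩ := (Set.two_lt_ncard_iff hEfin).mp (by omega)
  refine hQ (eq_zero_of_totalDegree_le_two_of_eval_eq_zero hQ2 hab
    (hL ▸ subset_affineSpan ℂ _ (by simp)) (Ne.symm hac) (Ne.symm hbc) (hEV hw).2 (hEV hx).2
    (hEV hy).2 (hE w hw x hx y hy hwx hwy hxy) fun p hp => h0 p ?_)
  simp only [Set.mem_insert_iff, Set.mem_singleton_iff] at hp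
  rcases hp with rfl | rfl | rfl | rfl | rfl | rfl <;> simp [*]
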